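/- arXiv:1312.3552 — 4 statements merged into one kernel-verified Lean document; each statement's English description precedes it below -/
import Mathlib

section
/- Let G = (A ∪ H, E) be a House Allocation with Ties (HAT) instance and let G₁ = (A ∪ H, E₁) be its first-choice graph. If M is a popular matching of G, then M ∩ E₁ is a maximum matching of G₁. -/
/-!
A popular matching `M` matches every agent (otherwise an unmatched agent could take its last
resort), so `M` is the graph of an injective `m : A → H`. Let `S` be the set of agents whose
`M`-house is a first choice; `M ∩ E₁` has `|S|` edges.

Given a matching `N` of `G₁`, take `N` together with the edges of `M` that avoid `N`. Every
agent outside `S` that `N` covers prefers this matching, and only the agents it leaves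
unmatched prefer `M`, so popularity yields `|N| ≤ |S| + |D(N)|`, where `D(N) = displaced E₁ m N`
consists of the agents outside `S` that `N` leaves uncovered while taking their `M`-house.

Suppose `|N| > |S|`. Among the matchings of `G₁` at least as large as `N`, one containing as
many edges of `M` as possible covers every house `m s` with `s ∈ S` (otherwise move `s` onto
`m s`), and its `D(N)` is nonempty. Give some `x ∈ D(N)` a first choice, evicting its holder.
The resulting `N'` covers `m '' (S ∪ D(N') ∪ {x})`, and since `m` is injective this gives
`|S| + |D(N')| < |N'|`, a contradiction.
-/

/-- A House Allocation with Ties (HAT) instance: agents `A`, houses `H`, an adjacency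
relation (each agent ranks the adjacent houses; lower rank means more preferred, ties
allowed), together with a unique last-resort house `l(a)` for each agent `a`, which is
strictly the least preferred house of `a` and appears only on `a`'s list. -/
structure HATInstance (A H : Type*) where
  adj : A → H → Prop
  rank : A → H → ℕ
  lastResort : A → H
  lastResort_injective : Function.Injective lastResort
  lastResort_adj : ∀ a, adj a (lastResort a)
  lastResort_worst : ∀ a h, adj a h → h ≠ lastResort a → rank a h < rank a (lastResort a)
  lastResort_only : ∀ a a', adj a' (lastResort a) → a' = a

namespace HATInstance

variable {A H : Type*}

/-- The edge set of the bipartite graph `G = (A ∪ H, E)` of the instance. -/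
def edgeSet (I : HATInstance A H) : Set (A × H) := {p | I.adj p.1 p.2}

/-- `M` is a matching contained in the edge set `E`: every agent is in at most one
edge of `M` and every house is in at most one edge of `M`. -/
def IsMatchingIn (E M : Set (A × H)) : Prop :=
  M ⊆ E ∧ (∀ p ∈ M, ∀ q ∈ M, p.1 = q.1 → p = q) ∧ (∀ p ∈ M, ∀ q ∈ M, p.2 = q.2 → p = q)

/-- A maximum (cardinality) matching contained in the edge set `E`. -/
def IsMaxMatchingIn (E M : Set (A × H)) : Prop :=
  IsMatchingIn E M ∧ ∀ N : Set (A × H), IsMatchingIn E N → N.ncard ≤ M.ncard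

/-- A matching of the instance `I`. -/
def IsMatching (I : HATInstance A H) (M : Set (A × H)) : Prop :=
  IsMatchingIn I.edgeSet M

/-- Agent `a` prefers matching `M` to matching `M'`: `a` is matched in `M` and either
unmatched in `M'`, or strictly prefers its house in `M` to its house in `M'`. -/
def Prefers (I : HATInstance A H) (M M' : Set (A × H)) (a : A) : Prop :=
  ∃ h, (a, h) ∈ M ∧ ∀ h', (a, h') ∈ M' → I.rank a h < I.rank a h'

/-- `M` is more popular than `M'`. -/
def MorePopular [Fintype A] (I : HATInstance A H) (M M' : Set (A × H)) : Prop :=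
  Nat.card {a | Prefers I M M' a} > Nat.card {a | Prefers I M' M a}

/-- `M` is a popular matching of `I`: it is a matching and no matching is more
popular than it. -/
def IsPopular [Fintype A] (I : HATInstance A H) (M : Set (A × H)) : Prop :=
  I.IsMatching M ∧ ∀ M', I.IsMatching M' → ¬ MorePopular I M' M

/-- `f(a)`: the set of top-ranked (first-choice) houses of agent `a`. -/
def firstChoices (I : HATInstance A H) (a : A) : Set H :=
  {h | I.adj a h ∧ ∀ h', I.adj a h' → I.rank a h ≤ I.rank a h'}

/-- The edge set `E₁` of the first-choice graph `G₁`. -/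
def firstChoiceEdges (I : HATInstance A H) : Set (A × H) :=
  {p | p.2 ∈ I.firstChoices p.1}

end HATInstance

open Set Function

namespace HATInstance

variable {A H : Type*}

namespace IsMatchingIn

variable {E N M : Set (A × H)}

theorem mono {E' : Set (A × H)} (hN : IsMatchingIn E N) (hE : E ⊆ E') : IsMatchingIn E' N :=
  ⟨hN.1.trans hE, hN.2⟩

theorem inter (hM : IsMatchingIn E M) (E' : Set (A × H)) : IsMatchingIn E' (M ∩ E') :=
  ⟨inter_subset_right, fun p hp q hq => hM.2.1 p hp.1 q hq.1,
    fun p hp q hq => hM.2.2 p hp.1 q hq.1⟩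

theorem ncard_image_fst (hN : IsMatchingIn E N) : (Prod.fst '' N).ncard = N.ncard :=
  InjOn.ncard_image fun p hp q hq => hN.2.1 p hp q hq

theorem ncard_image_snd (hN : IsMatchingIn E N) : (Prod.snd '' N).ncard = N.ncard :=
  InjOn.ncard_image fun p hp q hq => hN.2.2 p hp q hq

theorem finite [Finite A] (hN : IsMatchingIn E N) : N.Finite :=
  (toFinite _).of_finite_image fun p hp q hq => hN.2.1 p hp q hq

theorem insert_diff (hN : IsMatchingIn E N) {e : A × H} (he : e ∈ E) {R : Set (A × H)}
    (hR : ∀ q ∈ N, q.1 = e.1 ∨ q.2 = e.2 → q ∈ R) : IsMatchingIn E (insert e (N \ R)) := by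
  refine ⟨insert_subset he (sdiff_subset.trans hN.1), ?_, ?_⟩
  · rintro p (rfl | ⟨hp, hpR⟩) q (rfl | ⟨hq, hqR⟩) h
    · rfl
    · exact absurd (hR q hq (Or.inl h.symm)) hqR
    · exact absurd (hR p hp (Or.inl h)) hpR
    · exact hN.2.1 p hp q hq h
  · rintro p (rfl | ⟨hp, hpR⟩) q (rfl | ⟨hq, hqR⟩) h
    · rfl
    · exact absurd (hR q hq (Or.inr h.symm)) hqR
    · exact absurd (hR p hp (Or.inr h)) hpR
    · exact hN.2.2 p hp q hq h

theorem union_sep (hN : IsMatchingIn E N) (hM : IsMatchingIn E M) :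
    IsMatchingIn E (N ∪ {p ∈ M | p.1 ∉ Prod.fst '' N ∧ p.2 ∉ Prod.snd '' N}) := by
  refine ⟨union_subset hN.1 fun p hp => hM.1 hp.1, ?_, ?_⟩
  · rintro p (hp | ⟨hp, hp1, -⟩) q (hq | ⟨hq, hq1, -⟩) h
    · exact hN.2.1 p hp q hq h
    · exact absurd ⟨p, hp, h⟩ hq1
    · exact absurd ⟨q, hq, h.symm⟩ hp1
    · exact hM.2.1 p hp q hq h
  · rintro p (hp | ⟨hp, -, hp2⟩) q (hq | ⟨hq, -, hq2⟩) h
    · exact hN.2.2 p hp q hq h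
    · exact absurd ⟨p, hp, h⟩ hq2
    · exact absurd ⟨q, hq, h.symm⟩ hp2
    · exact hM.2.2 p hp q hq h

end IsMatchingIn

section Displaced

variable [Finite A] {E N : Set (A × H)} {m : A → H}

def displaced (E : Set (A × H)) (m : A → H) (N : Set (A × H)) : Set A :=
  {a | (a, m a) ∉ E ∧ a ∉ Prod.fst '' N ∧ m a ∈ Prod.snd '' N}

theorem ncard_add_ncard_displaced_lt (hm : Injective m) (hN : IsMatchingIn E N) {x : A}
    (hxN : x ∈ Prod.fst '' N) (hxE : (x, m x) ∉ E)
    (hS : m '' insert x {a | (a, m a) ∈ E} ⊆ Prod.snd '' N) :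
    {a | (a, m a) ∈ E}.ncard + (displaced E m N).ncard < N.ncard := by
  have hdisj : Disjoint (displaced E m N) {a | (a, m a) ∈ E} :=
    disjoint_left.2 fun a ha => ha.1
  have hx : x ∉ displaced E m N ∪ {a | (a, m a) ∈ E} := by
    rintro (hx | hx)
    exacts [hx.2.1 hxN, hxE hx]
  have hsub : m '' insert x (displaced E m N ∪ {a | (a, m a) ∈ E}) ⊆ Prod.snd '' N := by
    rintro _ ⟨a, rfl | ha | ha, rfl⟩
    · exact hS (mem_image_of_mem m (mem_insert _ _))
    · exact ha.2.2
    · exact hS (mem_image_of_mem m (mem_insert_of_mem _ ha))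
  calc {a | (a, m a) ∈ E}.ncard + (displaced E m N).ncard
      < (insert x (displaced E m N ∪ {a | (a, m a) ∈ E})).ncard := by
        rw [ncard_insert_of_notMem hx, ncard_union_eq hdisj]; omega
    _ = (m '' insert x (displaced E m N ∪ {a | (a, m a) ∈ E})).ncard :=
        (ncard_image_of_injective _ hm).symm
    _ ≤ (Prod.snd '' N).ncard := ncard_le_ncard hsub (hN.finite.image _)
    _ = N.ncard := hN.ncard_image_snd

theorem exists_le_ncard_image_subset (hN : IsMatchingIn E N) :
    ∃ N', IsMatchingIn E N' ∧ N.ncard ≤ N'.ncard ∧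
      m '' {a | (a, m a) ∈ E} ⊆ Prod.snd '' N' := by
  obtain ⟨N', ⟨hN', hle⟩, hmin⟩ := exists_minimalFor_of_wellFoundedLT
    (fun N' => IsMatchingIn E N' ∧ N.ncard ≤ N'.ncard)
    (fun N' => {a | (a, m a) ∉ N'}.ncard) ⟨N, hN, le_rfl⟩
  refine ⟨N', hN', hle, ?_⟩
  rintro _ ⟨b, hb, rfl⟩
  by_contra hbN
  have hbN' : (b, m b) ∉ N' := fun h => hbN ⟨_, h, rfl⟩
  have hN'' : IsMatchingIn E (insert (b, m b) (N' \ {q | q.1 = b})) :=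
    hN'.insert_diff hb fun q hq h => h.resolve_right fun h2 => hbN ⟨q, hq, h2⟩
  have hcard : N'.ncard ≤ (insert (b, m b) (N' \ {q | q.1 = b})).ncard := by
    have hR : (N' ∩ {q | q.1 = b}).ncard ≤ 1 :=
      (ncard_le_one (hN'.finite.inter_of_left _)).2 fun p hp q hq =>
        hN'.2.1 p hp.1 q hq.1 (hp.2.trans hq.2.symm)
    have hb' : (b, m b) ∉ N' \ {q | q.1 = b} := fun h => h.2 rfl
    rw [ncard_insert_of_notMem hb' (hN'.finite.subset sdiff_subset),
      ← ncard_inter_add_ncard_sdiff_eq_ncard N' {q | q.1 = b} hN'.finite]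
    omega
  have hlt : {a | (a, m a) ∉ insert (b, m b) (N' \ {q | q.1 = b})}.ncard <
      {a | (a, m a) ∉ N'}.ncard := by
    refine ncard_lt_ncard ((ssubset_iff_of_subset fun a ha haN' => ?_).2 ⟨b, hbN', ?_⟩)
    · by_cases hab : a = b
      · exact hbN' (hab ▸ haN')
      · exact ha (mem_insert_of_mem _ ⟨haN', hab⟩)
    · exact not_not_intro (mem_insert _ _)
  exact hlt.not_ge (hmin ⟨hN'', hle.trans hcard⟩ hlt.le)

theorem ncard_le_of_image_subset (hm : Injective m) (hE : ∀ a, ∃ h, (a, h) ∈ E)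
    (hpop : ∀ N, IsMatchingIn E N →
      N.ncard ≤ {a | (a, m a) ∈ E}.ncard + (displaced E m N).ncard)
    (hN : IsMatchingIn E N) (hS : m '' {a | (a, m a) ∈ E} ⊆ Prod.snd '' N) :
    N.ncard ≤ {a | (a, m a) ∈ E}.ncard := by
  suffices displaced E m N = ∅ by simpa [this] using hpop N hN
  refine eq_empty_of_forall_notMem fun x ⟨hxE, hxN, hmx⟩ => ?_
  obtain ⟨g, hg⟩ := hE x
  have hN' : IsMatchingIn E (insert (x, g) (N \ {q | q.2 = g})) :=
    hN.insert_diff hg fun q hq h => h.resolve_left fun h1 => hxN ⟨q, hq, h1⟩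
  have hD : Prod.snd '' N ⊆ Prod.snd '' insert (x, g) (N \ {q | q.2 = g}) := by
    rintro _ ⟨q, hq, rfl⟩
    by_cases hqg : q.2 = g
    · exact ⟨(x, g), mem_insert _ _, hqg.symm⟩
    · exact ⟨q, mem_insert_of_mem _ ⟨hq, hqg⟩, rfl⟩
  refine (hpop _ hN').not_gt (ncard_add_ncard_displaced_lt hm hN' ⟨(x, g), mem_insert _ _, rfl⟩
    hxE ?_)
  rw [image_insert_eq]
  exact insert_subset (hD hmx) (hS.trans hD)

theorem ncard_le_of_forall_ncard_le_add_displaced (hm : Injective m)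
    (hE : ∀ a, ∃ h, (a, h) ∈ E)
    (hpop : ∀ N, IsMatchingIn E N →
      N.ncard ≤ {a | (a, m a) ∈ E}.ncard + (displaced E m N).ncard)
    (hN : IsMatchingIn E N) : N.ncard ≤ {a | (a, m a) ∈ E}.ncard := by
  obtain ⟨N', hN', hle, hS⟩ := exists_le_ncard_image_subset (m := m) hN
  exact hle.trans (ncard_le_of_image_subset hm hE hpop hN' hS)

end Displaced

theorem firstChoices_nonempty (I : HATInstance A H) (a : A) : (I.firstChoices a).Nonempty := by
  obtain ⟨h, hadj, hmin⟩ :=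
    exists_minimalFor_of_wellFoundedLT (I.adj a) (I.rank a) ⟨_, I.lastResort_adj a⟩
  exact ⟨h, hadj, fun h' hadj' => (le_total _ _).elim id (hmin hadj')⟩

theorem rank_lt_of_mem_firstChoices_of_notMem {I : HATInstance A H} {a : A} {h h' : H}
    (hh : h ∈ I.firstChoices a) (hadj : I.adj a h') (hh' : h' ∉ I.firstChoices a) :
    I.rank a h < I.rank a h' := by
  obtain ⟨h'', hadj'', hlt⟩ : ∃ h'', I.adj a h'' ∧ I.rank a h'' < I.rank a h' := by
    by_contra! hmin
    exact hh' ⟨hadj, hmin⟩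
  exact (hh.2 h'' hadj'').trans_lt hlt

section Popular

variable [Fintype A] {I : HATInstance A H} {M : Set (A × H)}

theorem IsPopular.exists_mem (hM : IsPopular I M) (a : A) : ∃ h, (a, h) ∈ M := by
  by_contra! hna
  have hM' : I.IsMatching (insert (a, I.lastResort a) M) := by
    have hR : ∀ q ∈ M, q.1 = a ∨ q.2 = I.lastResort a → q ∈ (∅ : Set (A × H)) := by
      rintro ⟨b, h⟩ hbh (rfl | rfl : b = a ∨ h = I.lastResort a)
      · exact hna h hbh
      · obtain rfl := I.lastResort_only a b (hM.1.1 hbh)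
        exact hna _ hbh
    simpa [IsMatching] using hM.1.insert_diff (e := (a, I.lastResort a)) (I.lastResort_adj a) hR
  refine hM.2 _ hM' ?_
  have hnone : {b | Prefers I M (insert (a, I.lastResort a) M) b} = ∅ :=
    eq_empty_of_forall_notMem fun b ⟨h, hb, hlt⟩ => (hlt h (mem_insert_of_mem _ hb)).false
  have ha : a ∈ {b | Prefers I (insert (a, I.lastResort a) M) M b} :=
    ⟨I.lastResort a, mem_insert _ _, fun h hh => absurd hh (hna h)⟩
  rw [MorePopular, Nat.card_coe_set_eq, Nat.card_coe_set_eq, hnone, ncard_empty]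
  exact (ncard_pos).2 ⟨a, ha⟩

theorem IsPopular.ncard_le_add_displaced (hM : IsPopular I M) {m : A → H}
    (hMm : ∀ a h, (a, h) ∈ M ↔ h = m a) {N : Set (A × H)}
    (hN : IsMatchingIn I.firstChoiceEdges N) :
    N.ncard ≤ {a | (a, m a) ∈ I.firstChoiceEdges}.ncard +
      (displaced I.firstChoiceEdges m N).ncard := by
  set S := {a | (a, m a) ∈ I.firstChoiceEdges}
  set C := Prod.fst '' N
  set M' := N ∪ {p ∈ M | p.1 ∉ C ∧ p.2 ∉ Prod.snd '' N}
  have hM' : I.IsMatching M' := (hN.mono fun p hp => hp.1).union_sep hM.1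
  have hadj : ∀ a, I.adj a (m a) := fun a => hM.1.1 ((hMm a _).2 rfl)
  have hgain : C \ S ⊆ {a | Prefers I M' M a} := by
    rintro _ ⟨⟨⟨a, h⟩, hp, rfl⟩, haS⟩
    refine ⟨h, mem_union_left _ hp, fun h' hh' => ?_⟩
    rw [(hMm a h').1 hh']
    exact rank_lt_of_mem_firstChoices_of_notMem (hN.1 hp) (hadj a) haS
  have hloss : {a | Prefers I M M' a} ⊆ displaced I.firstChoiceEdges m N ∪ (S \ C) := by
    rintro a ⟨h, hh, hlt⟩
    obtain rfl := (hMm a h).1 hh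
    have haC : a ∉ C := by
      rintro ⟨⟨b, h'⟩, hp, rfl⟩
      exact (hlt h' (mem_union_left _ hp)).not_ge ((hN.1 hp).2 _ (hadj b))
    have hmD : m a ∈ Prod.snd '' N := by
      by_contra hmD
      exact (hlt (m a) (mem_union_right _ ⟨hh, haC, hmD⟩)).false
    by_cases haS : a ∈ S
    · exact Or.inr ⟨haS, haC⟩
    · exact Or.inl ⟨haS, haC, hmD⟩
  have hpop : {a | Prefers I M' M a}.ncard ≤ {a | Prefers I M M' a}.ncard := by
    simpa [MorePopular, Nat.card_coe_set_eq] using hM.2 M' hM'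
  have hgain' := ncard_le_ncard hgain
  have hloss' := (ncard_le_ncard hloss).trans (ncard_union_le _ _)
  have hC := ncard_inter_add_ncard_sdiff_eq_ncard C S
  have hS := ncard_inter_add_ncard_sdiff_eq_ncard S C
  rw [inter_comm] at hS
  have hNC : N.ncard = C.ncard := hN.ncard_image_fst.symm
  omega

end Popular

end HATInstance

open HATInstance in
theorem popular_inter_firstChoice_isMaxMatching_general
    {A H : Type*} [Fintype A]
    (I : HATInstance A H) (M : Set (A × H)) (hM : IsPopular I M) :
    IsMaxMatchingIn I.firstChoiceEdges (M ∩ I.firstChoiceEdges) := by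
  choose m hm using hM.exists_mem
  have hMm : ∀ a h, (a, h) ∈ M ↔ h = m a := fun a h =>
    ⟨fun hah => congrArg Prod.snd (hM.1.2.1 _ hah _ (hm a) rfl), fun h => h ▸ hm a⟩
  have hinj : Injective m := fun a b hab => congrArg Prod.fst (hM.1.2.2 _ (hm a) _ (hm b) hab)
  have hM₁ := hM.1.inter I.firstChoiceEdges
  have hS : Prod.fst '' (M ∩ I.firstChoiceEdges) = {a | (a, m a) ∈ I.firstChoiceEdges} := by
    ext a
    refine ⟨?_, fun ha => ⟨(a, m a), ⟨hm a, ha⟩, rfl⟩⟩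
    rintro ⟨⟨a, h⟩, ⟨haM, haE⟩, rfl⟩
    obtain rfl := (hMm a h).1 haM
    exact haE
  refine ⟨hM₁, fun N hN => ?_⟩
  rw [← hM₁.ncard_image_fst, hS]
  exact ncard_le_of_forall_ncard_le_add_displaced hinj I.firstChoices_nonempty
    (fun N hN => hM.ncard_le_add_displaced hMm hN) hN

open HATInstance in
/-- If `M` is a popular matching of the HAT instance `G`, then `M ∩ E₁` is a maximum
matching of the first-choice graph `G₁`. -/
theorem popular_inter_firstChoice_isMaxMatching
    {A H : Type*} [Fintype A] [Fintype H]
    (I : HATInstance A H) (M : Set (A × H)) (hM : IsPopular I M) :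
    IsMaxMatchingIn I.firstChoiceEdges (M ∩ I.firstChoiceEdges) :=
  popular_inter_firstChoice_isMaxMatching_general I M hM
end

section
/- Let G₁ be a bipartite graph and M₁ a maximum matching of G₁. With respect to M₁, call a vertex v even (respectively odd) if there is an even-length (respectively odd-length) alternating path from some M₁-unmatched vertex to v, and unreachable if no alternating path from an unmatched vertex reaches v. Then the sets E (even), O (odd) and U (unreachable) are pairwise disjoint, and every maximum matching of G₁ induces the same partition of the vertices into even, odd and unreachable vertices. -/
/-- `M` is a matching of the graph `G`: a set of edges of `G` in which every vertex
lies in at most one edge. -/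
def IsGraphMatching {V : Type*} (G : SimpleGraph V) (M : Set (Sym2 V)) : Prop :=
  M ⊆ G.edgeSet ∧ ∀ e ∈ M, ∀ e' ∈ M, ∀ v : V, v ∈ e → v ∈ e' → e = e'

/-- A maximum (cardinality) matching of `G`. -/
def IsMaximumMatching {V : Type*} (G : SimpleGraph V) (M : Set (Sym2 V)) : Prop :=
  IsGraphMatching G M ∧ ∀ N : Set (Sym2 V), IsGraphMatching G N → N.ncard ≤ M.ncard

/-- A vertex is unmatched by `M` if it lies in no edge of `M`. -/
def UnmatchedVtx {V : Type*} (M : Set (Sym2 V)) (v : V) : Prop := ∀ e ∈ M, v ∉ e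

/-- A walk is alternating with respect to the matching `M` (as a walk starting at an
unmatched vertex) if its edges alternately avoid and belong to `M`, starting with an
edge not in `M`. -/
def IsAlternatingWalk {V : Type*} {G : SimpleGraph V} {u v : V} (M : Set (Sym2 V))
    (p : G.Walk u v) : Prop :=
  ∀ (i : ℕ) (h : i < p.edges.length), (p.edges.get ⟨i, h⟩ ∈ M ↔ i % 2 = 1)

/-- `v` is an even vertex: there is an even-length alternating path from some
`M`-unmatched vertex to `v`. -/
def EvenVtx {V : Type*} (G : SimpleGraph V) (M : Set (Sym2 V)) (v : V) : Prop :=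
  ∃ u, UnmatchedVtx M u ∧ ∃ p : G.Walk u v, p.IsPath ∧ IsAlternatingWalk M p ∧ Even p.length

/-- `v` is an odd vertex: there is an odd-length alternating path from some
`M`-unmatched vertex to `v`. -/
def OddVtx {V : Type*} (G : SimpleGraph V) (M : Set (Sym2 V)) (v : V) : Prop :=
  ∃ u, UnmatchedVtx M u ∧ ∃ p : G.Walk u v, p.IsPath ∧ IsAlternatingWalk M p ∧ Odd p.length

/-- `v` is unreachable: no alternating path from an `M`-unmatched vertex reaches `v`. -/
def UnreachableVtx {V : Type*} (G : SimpleGraph V) (M : Set (Sym2 V)) (v : V) : Prop :=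
  ¬ ∃ u, UnmatchedVtx M u ∧ ∃ p : G.Walk u v, p.IsPath ∧ IsAlternatingWalk M p

/-- `G` is bipartite. -/
def IsBipartite {V : Type*} (G : SimpleGraph V) : Prop :=
  ∃ s : Set V, ∀ ⦃u v : V⦄, G.Adj u v → (u ∈ s ↔ v ∉ s)

/-!
Flipping a matching `M` along an `M`-alternating path from an unmatched vertex yields a matching
whose size grows by the parity of the path's length. Hence a maximum matching admits no odd
alternating path between unmatched vertices, and every even vertex is missed by some maximum
matching. Conversely, a vertex `v` missed by a maximum matching `N` is even for every matching `M`: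
a longest path from `v` with edges alternately in `M \ N` and `N \ M` cannot be extended, so if it
had odd length its end would be `N`-unmatched and the path `N`-augmenting; thus it has even length,
its end is `M`-unmatched, and reversed it is an even `M`-alternating path to `v`. So the even
vertices are exactly those missed by some maximum matching.

In a bipartite graph the parity of a walk's length is fixed by the sides of its ends, so the odd
vertices are exactly the neighbours of even vertices and are invariant as well. A vertex that is
both even and odd for `M` is odd for a maximum matching missing it, which yields an augmenting path.
-/

section

open SimpleGraph.Walk

variable {V : Type*} {G : SimpleGraph V} {K M N : Set (Sym2 V)}

theorem Set.ncard_symmDiff_add_two_mul_ncard_inter {α : Type*} {s t : Set α} (hs : s.Finite)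
    (ht : t.Finite) : (symmDiff s t).ncard + 2 * (s ∩ t).ncard = s.ncard + t.ncard := by
  rw [Set.symmDiff_def, Set.ncard_union_eq disjoint_sdiff_sdiff hs.sdiff ht.sdiff,
    ← Set.ncard_inter_add_ncard_sdiff_eq_ncard s t hs,
    ← Set.ncard_inter_add_ncard_sdiff_eq_ncard t s ht, Set.inter_comm t s]
  omega

theorem SimpleGraph.Walk.IsTrail.ncard_edgeSet {u v : V} {p : G.Walk u v} (hp : p.IsTrail) :
    p.edgeSet.ncard = p.length := by
  classical
  rw [show p.edgeSet = ↑p.edges.toFinset by ext; simp [edgeSet], Set.ncard_coe_finset,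
    List.toFinset_card_of_nodup hp.edges_nodup, length_edges]

theorem SimpleGraph.Walk.IsPath.eq_or_eq_succ_of_getVert_mem {u v : V} {p : G.Walk u v}
    (hp : p.IsPath) {a i : ℕ} (ha : a ≤ p.length) (hi : i < p.edges.length)
    (hai : p.getVert a ∈ p.edges[i]) : a = i ∨ a = i + 1 := by
  rw [getElem_edges, Sym2.mem_iff] at hai
  rw [length_edges] at hi
  exact hai.imp (fun h => hp.getVert_injOn ha (by rw [Set.mem_ofPred_eq]; omega) h)
    (fun h => hp.getVert_injOn ha (by rw [Set.mem_ofPred_eq]; omega) h)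

theorem SimpleGraph.exists_isPath_forall_length_le [Fintype V] {v : V}
    (P : (x : V) → G.Walk v x → Prop) (h : P v nil) :
    ∃ x, ∃ q : G.Walk v x, q.IsPath ∧ P x q ∧
      ∀ y (q' : G.Walk v y), q'.IsPath → P y q' → q'.length ≤ q.length := by
  let S := {n | ∃ x, ∃ q : G.Walk v x, q.IsPath ∧ P x q ∧ q.length = n}
  have hS : BddAbove S := ⟨Fintype.card V, by rintro _ ⟨x, q, hq, -, rfl⟩; exact hq.length_lt.le⟩
  obtain ⟨x, q, hq, hPq, hlen⟩ := Nat.sSup_mem (s := S) ⟨0, v, nil, .nil, h, rfl⟩ hS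
  exact ⟨x, q, hq, hPq, fun y q' hq' hP' => hlen ▸ le_csSup hS ⟨y, q', hq', hP', rfl⟩⟩

theorem IsBipartite.even_length_iff_odd_length (hG : IsBipartite G) {u a b : V}
    (p : G.Walk u a) (q : G.Walk u b) (hab : G.Adj a b) : Even p.length ↔ Odd q.length := by
  classical
  obtain ⟨s, hs⟩ := hG
  let c : G.Coloring Bool :=
    SimpleGraph.Coloring.mk (fun x => decide (x ∈ s)) fun hxy => by simp [hs hxy]
  have hc : ¬ (c a ↔ c b) := fun h => c.valid hab (Bool.eq_iff_iff.mpr h)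
  rw [c.even_length_iff_congr, c.odd_length_iff_not_congr]
  tauto

theorem IsGraphMatching.subset (hM : IsGraphMatching G M) (hNM : N ⊆ M) :
    IsGraphMatching G N :=
  ⟨hNM.trans hM.1, fun e he e' he' => hM.2 e (hNM he) e' (hNM he')⟩

theorem IsGraphMatching.union (hM : IsGraphMatching G M) (hN : IsGraphMatching G N)
    (hMN : ∀ e ∈ M, ∀ e' ∈ N, ∀ x, x ∈ e → x ∉ e') : IsGraphMatching G (M ∪ N) := by
  refine ⟨Set.union_subset hM.1 hN.1, ?_⟩
  rintro e (he | he) e' (he' | he') x hxe hxe'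
  · exact hM.2 e he e' he' x hxe hxe'
  · exact absurd hxe' (hMN e he e' he' x hxe)
  · exact absurd hxe (hMN e' he' e he x hxe')
  · exact hN.2 e he e' he' x hxe hxe'

theorem isAlternatingWalk_cons_iff {u w v : V} (h : G.Adj u w) (p : G.Walk w v) :
    IsAlternatingWalk K (cons h p) ↔ s(u, w) ∉ K ∧ IsAlternatingWalk Kᶜ p := by
  constructor
  · intro hp
    refine ⟨fun hK => by simpa using (hp 0 (by simp)).mp hK, fun i hi => ?_⟩
    have := hp (i + 1) (by simpa using hi)
    simp only [edges_cons, List.get_eq_getElem, List.getElem_cons_succ] at this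
    simp only [List.get_eq_getElem, Set.mem_compl_iff, this]
    omega
  · rintro ⟨hK, hp⟩ i hi
    cases i with
    | zero => simpa using hK
    | succ i =>
      have := hp i (by simpa using hi)
      simp only [List.get_eq_getElem, Set.mem_compl_iff] at this
      simp only [edges_cons, List.get_eq_getElem, List.getElem_cons_succ]
      rw [← not_iff_not, this]
      omega

theorem isAlternatingWalk_concat_iff {u v w : V} (p : G.Walk u v) (h : G.Adj v w) :
    IsAlternatingWalk K (p.concat h) ↔ IsAlternatingWalk K p ∧ (s(v, w) ∈ K ↔ Odd p.length) := by
  have hedges : (p.concat h).edges = p.edges ++ [s(v, w)] := by simp [edges_concat]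
  simp only [IsAlternatingWalk, List.get_eq_getElem, hedges, List.length_append,
    List.length_singleton, length_edges]
  constructor
  · intro hp
    refine ⟨fun i hi => ?_, ?_⟩
    · simpa [List.getElem_append_left (p.length_edges ▸ hi)] using hp i (by omega)
    · simpa [Nat.odd_iff] using hp p.length (by omega)
  · rintro ⟨hp, hlast⟩ i hi
    rcases Nat.lt_or_ge i p.length with hi' | hi'
    · simpa [List.getElem_append_left (p.length_edges ▸ hi')] using hp i hi'
    · obtain rfl : i = p.length := by omega
      simpa [Nat.odd_iff] using hlast

namespace IsAlternatingWalk

variable {u v : V} {p : G.Walk u v}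

theorem of_append_left {w : V} {q : G.Walk v w} (h : IsAlternatingWalk K (p.append q)) :
    IsAlternatingWalk K p := by
  intro i hi
  have hi' : i < (p.append q).edges.length := by rw [edges_append, List.length_append]; omega
  simpa [edges_append, List.getElem_append_left hi] using h i hi'

theorem getElem_edges_reverse_mem_iff (h : IsAlternatingWalk K p) {i : ℕ}
    (hi : i < p.reverse.edges.length) :
    p.reverse.edges[i] ∈ K ↔ (p.length - 1 - i) % 2 = 1 := by
  have hi' : i < p.length := by simpa using hi
  simpa [edges_reverse, List.getElem_reverse] using h (p.length - 1 - i) (by simp; omega)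

theorem reverse_of_even (h : IsAlternatingWalk K p) (he : Even p.length) :
    IsAlternatingWalk Kᶜ p.reverse := fun i hi => by
  have hi' : i < p.length := by simpa using hi
  obtain ⟨k, hk⟩ := he
  show p.reverse.edges[i] ∉ K ↔ _
  rw [getElem_edges_reverse_mem_iff h]
  omega

theorem reverse_of_odd (h : IsAlternatingWalk K p) (ho : Odd p.length) :
    IsAlternatingWalk K p.reverse := fun i hi => by
  have hi' : i < p.length := by simpa using hi
  obtain ⟨k, hk⟩ := ho
  show p.reverse.edges[i] ∈ K ↔ _
  rw [getElem_edges_reverse_mem_iff h]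
  omega

theorem mem_edges_of_mem (hK : IsGraphMatching G K) (h : IsAlternatingWalk K p) {x : V}
    (hx : x ∈ p.support) (hxu : x ≠ u) (hxv : x = v → Even p.length) {f : Sym2 V}
    (hf : f ∈ K) (hxf : x ∈ f) : f ∈ p.edges := by
  obtain ⟨a, rfl, ha⟩ := mem_support_iff_exists_getVert.mp hx
  have ha0 : a ≠ 0 := by rintro rfl; exact hxu p.getVert_zero
  -- `p.getVert a` lies on the `K`-edge of odd index among the edges `a - 1` and `a`
  obtain ⟨i, hi, hiodd, hxi⟩ : ∃ i, ∃ hi : i < p.edges.length, i % 2 = 1 ∧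
      p.getVert a ∈ p.edges[i] := by
    rcases Nat.even_or_odd a with hae | hao
    · refine ⟨a - 1, by rw [length_edges]; omega, by rcases hae with ⟨k, hk⟩; omega, ?_⟩
      rw [getElem_edges, Nat.sub_add_cancel (by omega)]
      exact Sym2.mem_mk_right _ _
    · have hal : a < p.length := by
        refine lt_of_le_of_ne ha fun hal => ?_
        have := hxv (by rw [hal, getVert_length])
        rw [← hal, ← Nat.not_odd_iff_even] at this
        exact this hao
      refine ⟨a, by rwa [length_edges], Nat.odd_iff.mp hao, ?_⟩
      rw [getElem_edges]
      exact Sym2.mem_mk_left _ _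
  rw [hK.2 f hf _ ((h i hi).mpr hiodd) _ hxf hxi]
  exact List.getElem_mem hi

theorem notMem_edges_of_start_mem (hp : p.IsPath) (h : IsAlternatingWalk K p) {f : Sym2 V}
    (hf : f ∈ K) (huf : u ∈ f) : f ∉ p.edges := by
  cases p with
  | nil => simp
  | cons hadj q =>
    rw [isAlternatingWalk_cons_iff] at h
    rw [cons_isPath_iff] at hp
    rw [edges_cons, List.mem_cons, not_or]
    exact ⟨fun hfe => h.1 (hfe ▸ hf), fun hfq => hp.2 (q.mem_support_of_mem_edges hfq huf)⟩

theorem notMem_support_of_mem (hK : IsGraphMatching G K) (hp : p.IsPath)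
    (h : IsAlternatingWalk K p) {y : V} (hf : s(u, y) ∈ K) (hyv : y = v → Even p.length) :
    y ∉ p.support := by
  intro hy
  have hyu : y ≠ u := (G.ne_of_adj (hK.1 hf)).symm
  exact notMem_edges_of_start_mem hp h hf (Sym2.mem_mk_left _ _)
    (mem_edges_of_mem hK h hy hyu hyv hf (Sym2.mem_mk_right _ _))

theorem notMem_of_start_mem (hM : IsGraphMatching G M) (hp : p.IsPath)
    (h : IsAlternatingWalk K p) (h' : IsAlternatingWalk Mᶜ p)
    (hu : p.length = 0 → UnmatchedVtx M u) {f : Sym2 V} (hf : f ∈ K) (huf : u ∈ f) : f ∉ M := by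
  intro hfM
  cases p with
  | nil => exact hu rfl f hfM huf
  | cons hadj q =>
    have hfirst : s(u, _) ∈ M := not_not.mp ((isAlternatingWalk_cons_iff hadj q).mp h').1
    have hfe : f ∈ (cons hadj q).edges := by
      rw [hM.2 f hfM _ hfirst u huf (Sym2.mem_mk_left _ _)]
      exact List.mem_cons_self
    exact h.notMem_edges_of_start_mem hp hf huf hfe

theorem ncard_edgeSet_inter (hp : p.IsTrail) (h : IsAlternatingWalk K p) :
    (p.edgeSet ∩ K).ncard = p.length / 2 := by
  induction p generalizing K with
  | nil => simp
  | cons hadj q ih =>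
    rw [isAlternatingWalk_cons_iff] at h
    rw [isTrail_cons] at hp
    have hsplit := Set.ncard_inter_add_ncard_sdiff_eq_ncard q.edgeSet K q.edges.finite_toSet
    rw [Set.sdiff_eq, ih hp.1 h.2, hp.1.ncard_edgeSet] at hsplit
    rw [edgeSet_cons, Set.insert_inter_of_notMem h.1, length_cons]
    omega

theorem isGraphMatching_edgeSet_diff (hp : p.IsPath) (h : IsAlternatingWalk K p) :
    IsGraphMatching G (p.edgeSet \ K) := by
  refine ⟨fun e he => p.edges_subset_edgeSet he.1, ?_⟩
  rintro e ⟨he, heK⟩ e' ⟨he', he'K⟩ x hxe hxe'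
  obtain ⟨i, hi, rfl⟩ := List.getElem_of_mem he
  obtain ⟨j, hj, rfl⟩ := List.getElem_of_mem he'
  have hi2 : i % 2 = 0 := by have := (h i hi).not.mp heK; omega
  have hj2 : j % 2 = 0 := by have := (h j hj).not.mp he'K; omega
  obtain ⟨a, rfl, ha⟩ := mem_support_iff_exists_getVert.mp (p.mem_support_of_mem_edges he hxe)
  have := hp.eq_or_eq_succ_of_getVert_mem ha hi hxe
  have := hp.eq_or_eq_succ_of_getVert_mem ha hj hxe'
  obtain rfl : i = j := by omega
  rfl

theorem isGraphMatching_symmDiff (hM : IsGraphMatching G M) (hp : p.IsPath)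
    (h : IsAlternatingWalk M p) (hu : UnmatchedVtx M u) (hv : Odd p.length → UnmatchedVtx M v) :
    IsGraphMatching G (symmDiff M p.edgeSet) := by
  rw [Set.symmDiff_def]
  refine (hM.subset Set.sdiff_subset).union (isGraphMatching_edgeSet_diff hp h) ?_
  rintro e ⟨heM, heE⟩ e' ⟨he', -⟩ x hxe hxe'
  have hxu : x ≠ u := by rintro rfl; exact hu e heM hxe
  have hxv : x = v → Even p.length := by
    rintro rfl
    by_contra hodd
    exact hv (Nat.not_even_iff_odd.mp hodd) e heM hxe
  exact heE (mem_edges_of_mem hM h (p.mem_support_of_mem_edges he' hxe') hxu hxv heM hxe)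

theorem ncard_symmDiff (hM : M.Finite) (hp : p.IsTrail) (h : IsAlternatingWalk M p) :
    (symmDiff M p.edgeSet).ncard = M.ncard + p.length % 2 := by
  have := Set.ncard_symmDiff_add_two_mul_ncard_inter (t := p.edgeSet) hM p.edges.finite_toSet
  rw [Set.inter_comm, ncard_edgeSet_inter hp h, hp.ncard_edgeSet] at this
  omega

theorem unmatchedVtx_symmDiff (hM : IsGraphMatching G M) (hp : p.IsPath)
    (h : IsAlternatingWalk M p) (hu : UnmatchedVtx M u) (he : Even p.length) :
    UnmatchedVtx (symmDiff M p.edgeSet) v := by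
  rintro e (⟨heM, heE⟩ | ⟨heE, heM⟩) hve
  · by_cases hvu : v = u
    · exact hu e heM (hvu ▸ hve)
    · exact heE (mem_edges_of_mem hM h p.end_mem_support hvu (fun _ => he) heM hve)
  · refine notMem_edges_of_start_mem hp.reverse (h.reverse_of_even he) heM hve ?_
    simpa [edges_reverse] using heE

end IsAlternatingWalk

theorem oddVtx_of_evenVtx_of_adj (hG : IsBipartite G) (hM : IsGraphMatching G M) {w v : V}
    (hwv : G.Adj w v) (hw : EvenVtx G M w) : OddVtx G M v := by
  classical
  obtain ⟨u, hu, p, hp, h, he⟩ := hw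
  by_cases hv : v ∈ p.support
  · refine ⟨u, hu, p.takeUntil v hv, hp.takeUntil hv, ?_,
      (hG.even_length_iff_odd_length p _ hwv).mp he⟩
    exact IsAlternatingWalk.of_append_left (q := p.dropUntil v hv) (by rwa [take_spec])
  have hwvM : s(w, v) ∉ M := by
    intro hwvM
    by_cases hwu : w = u
    · exact hu _ hwvM (hwu ▸ Sym2.mem_mk_left w v)
    · exact hv (p.snd_mem_support_of_mem_edges (h.mem_edges_of_mem hM p.end_mem_support hwu
        (fun _ => he) hwvM (Sym2.mem_mk_left w v)))
  refine ⟨u, hu, p.concat hwv, hp.concat hv hwv, (isAlternatingWalk_concat_iff p hwv).mpr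
    ⟨h, iff_of_false hwvM (Nat.not_odd_iff_even.mpr he)⟩, ?_⟩
  rw [length_concat]
  exact he.add_one

theorem exists_adj_evenVtx_of_oddVtx {v : V} (hv : OddVtx G M v) :
    ∃ w, G.Adj w v ∧ EvenVtx G M w := by
  obtain ⟨u, hu, p, hp, h, ho⟩ := hv
  have hnil : ¬ p.Nil := by
    rw [← length_eq_zero_iff]
    rintro h0
    rw [h0] at ho
    exact Nat.not_odd_zero ho
  have hcat := concat_dropLast (p.adj_penultimate hnil)
  rw [← hcat] at hp h
  refine ⟨p.penultimate, p.adj_penultimate hnil, u, hu, p.dropLast,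
    ((concat_isPath_iff _).mp hp).1, ((isAlternatingWalk_concat_iff _ _).mp h).1, ?_⟩
  rw [← length_dropLast_add_one hnil] at ho
  exact Nat.not_odd_iff_even.mp (Nat.odd_add_one.mp ho)

theorem unreachableVtx_iff {v : V} :
    UnreachableVtx G M v ↔ ¬ EvenVtx G M v ∧ ¬ OddVtx G M v := by
  constructor
  · intro h
    exact ⟨fun ⟨u, hu, p, hp, h', _⟩ => h ⟨u, hu, p, hp, h'⟩,
      fun ⟨u, hu, p, hp, h', _⟩ => h ⟨u, hu, p, hp, h'⟩⟩
  · rintro ⟨he, ho⟩ ⟨u, hu, p, hp, h⟩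
    rcases Nat.even_or_odd p.length with hl | hl
    exacts [he ⟨u, hu, p, hp, h, hl⟩, ho ⟨u, hu, p, hp, h, hl⟩]

namespace IsMaximumMatching

theorem even_length_of_unmatchedVtx [Finite V] (hM : IsMaximumMatching G M) {u v : V}
    {p : G.Walk u v} (hp : p.IsPath) (h : IsAlternatingWalk M p) (hu : UnmatchedVtx M u)
    (hv : UnmatchedVtx M v) : Even p.length := by
  have hmax := hM.2 _ (h.isGraphMatching_symmDiff hM.1 hp hu fun _ => hv)
  rw [h.ncard_symmDiff M.toFinite hp.isTrail] at hmax
  exact Nat.even_iff.mpr (by omega)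

theorem exists_unmatchedVtx_of_evenVtx [Finite V] (hM : IsMaximumMatching G M) {v : V}
    (hv : EvenVtx G M v) : ∃ N, IsMaximumMatching G N ∧ UnmatchedVtx N v := by
  obtain ⟨u, hu, p, hp, h, he⟩ := hv
  have hodd : Odd p.length → UnmatchedVtx M v := fun ho => absurd he (Nat.not_even_iff_odd.mpr ho)
  refine ⟨symmDiff M p.edgeSet, ⟨h.isGraphMatching_symmDiff hM.1 hp hu hodd, fun N hN => ?_⟩,
    h.unmatchedVtx_symmDiff hM.1 hp hu he⟩
  rw [h.ncard_symmDiff M.toFinite hp.isTrail, Nat.even_iff.mp he]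
  exact hM.2 N hN

variable [Fintype V]

theorem evenVtx_of_unmatchedVtx (hN : IsMaximumMatching G N) (hM : IsGraphMatching G M) {v : V}
    (hv : UnmatchedVtx N v) : EvenVtx G M v := by
  -- a longest path from `v` whose edges lie alternately in `M \ N` and `N \ M`
  obtain ⟨x, q, hq, ⟨hqN, hqM⟩, hmax⟩ := SimpleGraph.exists_isPath_forall_length_le (v := v)
    (fun _ q => IsAlternatingWalk N q ∧ IsAlternatingWalk Mᶜ q)
    ⟨fun _ h => by simp at h, fun _ h => by simp at h⟩
  have hext : ∀ y (hxy : G.Adj x y), y ∉ q.support → (s(x, y) ∈ N ↔ Odd q.length) →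
      (s(x, y) ∈ Mᶜ ↔ Odd q.length) → False := fun y hxy hy hyN hyM => by
    have := hmax y (q.concat hxy) (hq.concat hy hxy)
      ⟨(isAlternatingWalk_concat_iff q hxy).mpr ⟨hqN, hyN⟩,
        (isAlternatingWalk_concat_iff q hxy).mpr ⟨hqM, hyM⟩⟩
    simp at this
  rcases Nat.even_or_odd q.length with he | ho
  · have hrevM : IsAlternatingWalk M q.reverse := compl_compl M ▸ hqM.reverse_of_even he
    by_cases hx : UnmatchedVtx M x
    · exact ⟨x, hx, q.reverse, hq.reverse, hrevM, by simpa using he⟩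
    obtain ⟨f, hf, hxf⟩ : ∃ f ∈ M, x ∈ f := by simpa [UnmatchedVtx] using hx
    obtain ⟨y, rfl⟩ := Sym2.mem_iff_exists.mp hxf
    have hy := hrevM.notMem_support_of_mem hM hq.reverse hf (fun _ => by simpa using he)
    have hfN := hrevM.notMem_of_start_mem hN.1 hq.reverse (hqN.reverse_of_even he)
      (fun h0 => q.eq_of_length_eq_zero (by simpa using h0) ▸ hv) hf hxf
    exact (hext y (hM.1 hf) (by simpa using hy) (iff_of_false hfN (Nat.not_odd_iff_even.mpr he))
      (iff_of_false (not_not.mpr hf) (Nat.not_odd_iff_even.mpr he))).elim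
  · have hrevN : IsAlternatingWalk N q.reverse := hqN.reverse_of_odd ho
    by_cases hx : UnmatchedVtx N x
    · exact absurd (hN.even_length_of_unmatchedVtx hq hqN hv hx) (Nat.not_even_iff_odd.mpr ho)
    obtain ⟨f, hf, hxf⟩ : ∃ f ∈ N, x ∈ f := by simpa [UnmatchedVtx] using hx
    obtain ⟨y, rfl⟩ := Sym2.mem_iff_exists.mp hxf
    have hy := hrevN.notMem_support_of_mem hN.1 hq.reverse hf
      (fun hyv => (hv _ hf (hyv ▸ Sym2.mem_mk_right x y)).elim)
    have hfM := hrevN.notMem_of_start_mem hM hq.reverse (hqM.reverse_of_odd ho)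
      (fun h0 => absurd ho (by rw [← length_reverse, h0]; decide)) hf hxf
    exact (hext y (hN.1.1 hf) (by simpa using hy) (iff_of_true hf ho) (iff_of_true hfM ho)).elim

theorem evenVtx_of_evenVtx (hM : IsMaximumMatching G M) (hN : IsGraphMatching G N) {v : V}
    (hv : EvenVtx G M v) : EvenVtx G N v := by
  obtain ⟨K, hK, hvK⟩ := hM.exists_unmatchedVtx_of_evenVtx hv
  exact hK.evenVtx_of_unmatchedVtx hN hvK

theorem oddVtx_of_oddVtx (hG : IsBipartite G) (hM : IsMaximumMatching G M)
    (hN : IsGraphMatching G N) {v : V} (hv : OddVtx G M v) : OddVtx G N v := by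
  obtain ⟨w, hwv, hw⟩ := exists_adj_evenVtx_of_oddVtx hv
  exact oddVtx_of_evenVtx_of_adj hG hN hwv (hM.evenVtx_of_evenVtx hN hw)

theorem not_evenVtx_and_oddVtx (hG : IsBipartite G) (hM : IsMaximumMatching G M) {v : V} :
    ¬ (EvenVtx G M v ∧ OddVtx G M v) := by
  rintro ⟨he, ho⟩
  obtain ⟨N, hN, hvN⟩ := hM.exists_unmatchedVtx_of_evenVtx he
  obtain ⟨u, hu, p, hp, h, hodd⟩ := hM.oddVtx_of_oddVtx hG hN.1 ho
  exact Nat.not_even_iff_odd.mpr hodd (hN.even_length_of_unmatchedVtx hp h hu hvN)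

end IsMaximumMatching

end

/-- Gallai–Edmonds, part (a): with respect to a maximum matching `M₁` of a
finite bipartite graph `G₁`, the sets of even, odd and unreachable vertices are pairwise
disjoint, and every maximum matching induces the same partition. -/
theorem gallaiEdmonds_partition_disjoint_and_invariant
    {V : Type*} [Fintype V] (G₁ : SimpleGraph V) (hbip : IsBipartite G₁)
    (M₁ M₂ : Set (Sym2 V))
    (h₁ : IsMaximumMatching G₁ M₁) (h₂ : IsMaximumMatching G₁ M₂) :
    ({v | EvenVtx G₁ M₁ v} ∩ {v | OddVtx G₁ M₁ v} = ∅ ∧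
     {v | EvenVtx G₁ M₁ v} ∩ {v | UnreachableVtx G₁ M₁ v} = ∅ ∧
     {v | OddVtx G₁ M₁ v} ∩ {v | UnreachableVtx G₁ M₁ v} = ∅) ∧
    ({v | EvenVtx G₁ M₁ v} = {v | EvenVtx G₁ M₂ v} ∧
     {v | OddVtx G₁ M₁ v} = {v | OddVtx G₁ M₂ v} ∧
     {v | UnreachableVtx G₁ M₁ v} = {v | UnreachableVtx G₁ M₂ v}) := by
  have hE : ∀ v, EvenVtx G₁ M₁ v ↔ EvenVtx G₁ M₂ v := fun v =>
    ⟨h₁.evenVtx_of_evenVtx h₂.1, h₂.evenVtx_of_evenVtx h₁.1⟩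
  have hO : ∀ v, OddVtx G₁ M₁ v ↔ OddVtx G₁ M₂ v := fun v =>
    ⟨h₁.oddVtx_of_oddVtx hbip h₂.1, h₂.oddVtx_of_oddVtx hbip h₁.1⟩
  refine ⟨⟨?_, ?_, ?_⟩, Set.ext hE, Set.ext hO, Set.ext fun v => ?_⟩
  · exact Set.eq_empty_of_forall_notMem fun v => h₁.not_evenVtx_and_oddVtx hbip
  · exact Set.eq_empty_of_forall_notMem fun v ⟨he, hu⟩ => (unreachableVtx_iff.mp hu).1 he
  · exact Set.eq_empty_of_forall_notMem fun v ⟨ho, hu⟩ => (unreachableVtx_iff.mp hu).2 ho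
  · simp only [Set.mem_ofPred_eq, unreachableVtx_iff, hE, hO]
end

section
/- Let I be a Capacitated House Allocation (CHA) instance with agents A, houses H and capacity function c. If M is a popular matching of I, then for every f-house h, |M(h) ∩ f(h)| = min{c(h), |f(h)|}. -/
/-- A Capacitated House Allocation (CHA) instance: agents `A`, houses `H`, a capacity
function `cap : H → ℤ_{>0}`, and for each agent a strict preference order (lower rank
means more preferred) over its adjacent houses, augmented with a unique last-resort
house `l(a)` of capacity `1` and lowest preference, appearing only on `a`'s list. -/
structure CHAInstance (A H : Type*) where
  adj : A → H → Prop
  rank : A → H → ℕ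
  rank_strict : ∀ a h h', adj a h → adj a h' → rank a h = rank a h' → h = h'
  cap : H → ℕ
  cap_pos : ∀ h, 0 < cap h
  lastResort : A → H
  lastResort_injective : Function.Injective lastResort
  lastResort_adj : ∀ a, adj a (lastResort a)
  lastResort_worst : ∀ a h, adj a h → h ≠ lastResort a → rank a h < rank a (lastResort a)
  lastResort_only : ∀ a a', adj a' (lastResort a) → a' = a
  lastResort_cap : ∀ a, cap (lastResort a) = 1

namespace CHAInstance

variable {A H : Type*}

/-- A matching of the CHA instance `I`: each agent is matched to at most one adjacent
house, and each house `h` is matched to at most `cap h` agents. -/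
def IsMatching (I : CHAInstance A H) (M : Set (A × H)) : Prop :=
  (∀ p ∈ M, I.adj p.1 p.2) ∧ (∀ p ∈ M, ∀ q ∈ M, p.1 = q.1 → p = q) ∧
    (∀ h : H, {a | (a, h) ∈ M}.ncard ≤ I.cap h)

/-- Agent `a` prefers matching `M` to matching `M'`: `a` is matched in `M` and either
unmatched in `M'`, or strictly prefers its house in `M` to its house in `M'`. -/
def Prefers (I : CHAInstance A H) (M M' : Set (A × H)) (a : A) : Prop :=
  ∃ h, (a, h) ∈ M ∧ ∀ h', (a, h') ∈ M' → I.rank a h < I.rank a h'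

/-- `M` is more popular than `M'`. -/
def MorePopular [Fintype A] (I : CHAInstance A H) (M M' : Set (A × H)) : Prop :=
  Nat.card {a | Prefers I M M' a} > Nat.card {a | Prefers I M' M a}

/-- `M` is a popular matching of `I`. -/
def IsPopular [Fintype A] (I : CHAInstance A H) (M : Set (A × H)) : Prop :=
  I.IsMatching M ∧ ∀ M', I.IsMatching M' → ¬ MorePopular I M' M

/-- `h = f(a)`: house `h` is the (unique) first choice of agent `a`. -/
def IsFirstChoice (I : CHAInstance A H) (a : A) (h : H) : Prop :=
  I.adj a h ∧ ∀ h', I.adj a h' → I.rank a h ≤ I.rank a h'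

/-- `f(h)`: the set of agents whose first choice is `h`. -/
def fSet (I : CHAInstance A H) (h : H) : Set A := {a | IsFirstChoice I a h}

/-- `h` is an `f`-house if it is the first choice of some agent. -/
def IsFHouse (I : CHAInstance A H) (h : H) : Prop := ∃ a, IsFirstChoice I a h

/-- The defining condition for `s(a)`: `h` is not an `f`-house, or `h` is an `f`-house
with `h ≠ f(a)` and `|f(h)| < c(h)`. -/
def SCond (I : CHAInstance A H) (a : A) (h : H) : Prop :=
  ¬ IsFHouse I h ∨ (¬ IsFirstChoice I a h ∧ (fSet I h).ncard < I.cap h)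

/-- `h = s(a)`: house `h` is the highest-ranked house on `a`'s preference list
satisfying `SCond`. -/
def IsSecondChoice (I : CHAInstance A H) (a : A) (h : H) : Prop :=
  I.adj a h ∧ SCond I a h ∧ ∀ h', I.adj a h' → SCond I a h' → I.rank a h ≤ I.rank a h'

/-- The switching graph `G_M` of `I` with respect to a popular matching `M`:
`SwEdge I M a src tgt w` says that agent `a` contributes the directed edge from
`src = M(a)` to `tgt`, the other element of `{f(a), s(a)}`, with weight
`w = -1` if `M(a) = f(a)` and `w = +1` otherwise. -/
def SwEdge (I : CHAInstance A H) (M : Set (A × H)) (a : A) (src tgt : H) (w : ℤ) :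
    Prop :=
  (a, src) ∈ M ∧
    ((IsFirstChoice I a src ∧ IsSecondChoice I a tgt ∧ w = -1) ∨
     (IsSecondChoice I a src ∧ IsFirstChoice I a tgt ∧ w = 1))

/-- The unsaturation degree `u_M(h) = c(h) - |M(h)|` of a house `h`. -/
noncomputable def unsatDeg (I : CHAInstance A H) (M : Set (A × H)) (h : H) : ℕ :=
  I.cap h - {a | (a, h) ∈ M}.ncard

/-- A house is saturated if its unsaturation degree is `0`. -/
def Saturated (I : CHAInstance A H) (M : Set (A × H)) (h : H) : Prop :=
  unsatDeg I M h = 0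

end CHAInstance

/-
If an agent `a` with first choice `h` is not matched to `h`, then `h` is full, or moving `a`
to `h` would make `a` better off and nobody worse off. Moreover every agent `b` at `h` has
first choice `h`: otherwise `a` takes `b`'s place and `b` moves to its first choice `h'`, and
if `h'` has no room left, one agent `c` at `h'` is sent to its last resort. Two agents gain
and at most one loses. Hence `M(h)` is a set of `c(h)` agents of `f(h)`.
-/

namespace CHAInstance

variable {A H : Type*} {I : CHAInstance A H} {M M' N : Set (A × H)} {a b x : A} {h h' : H}

theorem exists_isFirstChoice [Finite H] (I : CHAInstance A H) (x : A) :
    ∃ h, I.IsFirstChoice x h := by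
  obtain ⟨h, hh, hmin⟩ := Set.exists_min_image {k | I.adj x k} (I.rank x) (Set.toFinite _)
    ⟨_, I.lastResort_adj x⟩
  exact ⟨h, hh, hmin⟩

theorem IsMatching.eq_of_mem (hM : I.IsMatching M) (h₁ : (x, h) ∈ M) (h₂ : (x, h') ∈ M) :
    h = h' :=
  congrArg Prod.snd (hM.2.1 _ h₁ _ h₂ rfl)

theorem IsMatching.agents_lastResort_subset (hM : I.IsMatching M) :
    {y | (y, I.lastResort x) ∈ M} ⊆ {x} :=
  fun y hy => I.lastResort_only x y (hM.1 _ hy)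

def unassign (M : Set (A × H)) (x : A) : Set (A × H) := {p ∈ M | p.1 ≠ x}

@[simp]
theorem mem_unassign {y : A} {k : H} : (y, k) ∈ unassign M x ↔ (y, k) ∈ M ∧ y ≠ x :=
  Iff.rfl

theorem isMatching_insert (hM : I.IsMatching M) (hx : ∀ k, (x, k) ∉ M) (hadj : I.adj x h)
    (hroom : {y | (y, h) ∈ M}.ncard < I.cap h) : I.IsMatching (insert (x, h) M) := by
  refine ⟨?_, ?_, fun k => ?_⟩
  · rintro p (rfl | hp)
    exacts [hadj, hM.1 p hp]
  · rintro ⟨y, k⟩ hp ⟨_, k'⟩ hq (rfl : y = _)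
    simp only [Set.mem_insert_iff, Prod.mk.injEq] at hp hq
    rcases hp with ⟨rfl, rfl⟩ | hp
    · rcases hq with ⟨-, rfl⟩ | hq
      exacts [rfl, absurd hq (hx k')]
    · rcases hq with ⟨rfl, -⟩ | hq
      exacts [absurd hp (hx k), hM.2.1 _ hp _ hq rfl]
  · by_cases hk : k = h
    · subst hk
      have : {y | (y, k) ∈ insert (x, k) M} = insert x {y | (y, k) ∈ M} := by
        ext y; simp
      rw [this]
      exact (Set.ncard_insert_le _ _).trans hroom
    · have : {y | (y, k) ∈ insert (x, h) M} = {y | (y, k) ∈ M} := by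
        ext y; simp [hk]
      exact this ▸ hM.2.2 k

section Finite

variable [Finite A]

theorem isMatching_unassign (hM : I.IsMatching M) (x : A) : I.IsMatching (unassign M x) :=
  ⟨fun p hp => hM.1 p hp.1, fun p hp q hq => hM.2.1 p hp.1 q hq.1,
    fun k => (Set.ncard_le_ncard fun _ hy => hy.1).trans (hM.2.2 k)⟩

theorem isMatching_exchange (hN : I.IsMatching N) (hb : (b, h) ∈ N) (hab : a ≠ b)
    (hh : h' ≠ h) (ha : I.adj a h) (hb' : I.adj b h')
    (hroom : ({y | (y, h') ∈ N} \ {a}).ncard < I.cap h') :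
    I.IsMatching (insert (b, h') (insert (a, h) (unassign (unassign N a) b))) := by
  refine isMatching_insert (isMatching_insert (isMatching_unassign (isMatching_unassign hN a) b)
    (by simp) ha ?_) (by simp [hab.symm]) hb' ?_
  · calc {y | (y, h) ∈ unassign (unassign N a) b}.ncard
        ≤ ({y | (y, h) ∈ N} \ {b}).ncard := Set.ncard_le_ncard fun y hy => ⟨hy.1.1, hy.2⟩
      _ < {y | (y, h) ∈ N}.ncard := Set.ncard_sdiff_singleton_lt_of_mem hb
      _ ≤ I.cap h := hN.2.2 h
  · refine lt_of_le_of_lt (Set.ncard_le_ncard fun y hy => ?_) hroom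
    simp only [Set.mem_ofPred_eq, Set.mem_insert_iff, Prod.mk.injEq, hh, and_false, false_or,
      mem_unassign] at hy
    exact ⟨hy.1.1, hy.1.2⟩

theorem isMatching_exchange_evict {c : A} (hM : I.IsMatching M) (hb : (b, h) ∈ M)
    (hc : (c, h') ∈ M) (hab : a ≠ b) (hca : c ≠ a) (hcb : c ≠ b) (hh : h' ≠ h)
    (ha : I.adj a h) (hb' : I.adj b h') :
    I.IsMatching (insert (c, I.lastResort c)
      (insert (b, h') (insert (a, h) (unassign (unassign (unassign M c) a) b)))) := by
  have hroom : ({y | (y, h') ∈ unassign M c} \ {a}).ncard < I.cap h' :=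
    calc _ ≤ ({y | (y, h') ∈ M} \ {c}).ncard := Set.ncard_le_ncard fun y hy => hy.1
      _ < {y | (y, h') ∈ M}.ncard := Set.ncard_sdiff_singleton_lt_of_mem hc
      _ ≤ I.cap h' := hM.2.2 h'
  have hE := isMatching_exchange (isMatching_unassign hM c) (by simpa using ⟨hb, hcb.symm⟩) hab
    hh ha hb' hroom
  have hcE : ∀ k, (c, k) ∉
      insert (b, h') (insert (a, h) (unassign (unassign (unassign M c) a) b)) := by
    simp [hca, hcb]
  refine isMatching_insert hE hcE (I.lastResort_adj c) (lt_of_eq_of_lt ?_ (I.cap_pos _))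
  refine (Set.ncard_eq_zero (Set.toFinite _)).2 (Set.subset_empty_iff.1 fun y hy => ?_)
  exact hcE _ (Set.mem_singleton_iff.1 (hE.agents_lastResort_subset hy) ▸ hy)

end Finite

theorem Prefers.not_prefers (hp : I.Prefers M M' x) : ¬ I.Prefers M' M x := by
  rintro ⟨k', hk', hlt'⟩
  obtain ⟨k, hk, hlt⟩ := hp
  exact lt_asymm (hlt k' hk') (hlt' k hk)

theorem prefers_of_isFirstChoice (hM : I.IsMatching M) (hf : I.IsFirstChoice x h)
    (hM' : (x, h) ∈ M') (hxh : (x, h) ∉ M) : I.Prefers M' M x := by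
  refine ⟨h, hM', fun k hk => (hf.2 k (hM.1 _ hk)).lt_of_ne fun heq => hxh ?_⟩
  rwa [I.rank_strict x h k hf.1 (hM.1 _ hk) heq]

variable [Fintype A]

theorem morePopular_of_ncard_lt (P Q : Set A) (hP : ∀ x ∈ P, I.Prefers M' M x)
    (hkeep : ∀ x ∉ P, x ∉ Q → ∀ k, (x, k) ∈ M → (x, k) ∈ M')
    (hQP : Q.ncard < P.ncard) :
    I.MorePopular M' M := by
  have hloss : {x | I.Prefers M M' x} ⊆ Q := by
    intro x hx
    by_contra hxQ
    by_cases hxP : x ∈ P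
    · exact hx.not_prefers (hP x hxP)
    · obtain ⟨k, hk, hlt⟩ := hx
      exact (hlt k (hkeep x hxP hxQ k hk)).false
  unfold MorePopular
  rw [Nat.card_coe_set_eq, Nat.card_coe_set_eq]
  calc {x | I.Prefers M M' x}.ncard ≤ Q.ncard := Set.ncard_le_ncard hloss
    _ < P.ncard := hQP
    _ ≤ _ := Set.ncard_le_ncard hP

theorem IsPopular.ncard_eq_cap (hM : I.IsPopular M) (ha : I.IsFirstChoice a h)
    (haM : (a, h) ∉ M) : {y | (y, h) ∈ M}.ncard = I.cap h := by
  refine (hM.1.2.2 h).antisymm (not_lt.1 fun hroom => ?_)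
  have hM' : I.IsMatching (insert (a, h) (unassign M a)) :=
    isMatching_insert (isMatching_unassign hM.1 a) (by simp) ha.1
      ((Set.ncard_le_ncard fun _ hy => hy.1).trans_lt hroom)
  refine hM.2 _ hM' (morePopular_of_ncard_lt {a} ∅ ?_ ?_ (by simp))
  · rintro x rfl
    exact prefers_of_isFirstChoice hM.1 ha (by simp) haM
  · intro x hx _ k hk
    simp_all

theorem IsPopular.isFirstChoice_of_mem [Finite H] (hM : I.IsPopular M)
    (ha : I.IsFirstChoice a h) (haM : (a, h) ∉ M) (hb : (b, h) ∈ M) : I.IsFirstChoice b h := by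
  by_contra hbh
  obtain ⟨h', hb'⟩ := exists_isFirstChoice I b
  have hh : h' ≠ h := by rintro rfl; exact hbh hb'
  have hab : a ≠ b := by rintro rfl; exact haM hb
  have hbM : (b, h') ∉ M := fun hb₂ => hh (hM.1.eq_of_mem hb₂ hb)
  have hgain : ∀ M', (a, h) ∈ M' → (b, h') ∈ M' →
      ∀ x ∈ ({a, b} : Set A), I.Prefers M' M x := by
    rintro M' ha' hb₂ x (rfl | rfl)
    exacts [prefers_of_isFirstChoice hM.1 ha ha' haM, prefers_of_isFirstChoice hM.1 hb' hb₂ hbM]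
  by_cases hroom : ({y | (y, h') ∈ M} \ {a}).ncard < I.cap h'
  · refine hM.2 _ (isMatching_exchange hM.1 hb hab hh ha.1 hb'.1 hroom)
      (morePopular_of_ncard_lt {a, b} ∅ (hgain _ (by simp) (by simp)) ?_ ?_)
    · intro x hx _ k hk
      simp_all
    · simp [Set.ncard_pair hab]
  · obtain ⟨c, hc, hca : c ≠ a⟩ :=
      (Set.ncard_pos (Set.toFinite _)).1 ((I.cap_pos h').trans_le (not_lt.1 hroom))
    have hcb : c ≠ b := by rintro rfl; exact hbM hc
    refine hM.2 _ (isMatching_exchange_evict hM.1 hb hc hab hca hcb hh ha.1 hb'.1)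
      (morePopular_of_ncard_lt {a, b} {c} (hgain _ (by simp) (by simp)) ?_ ?_)
    · intro x hx hxc k hk
      simp_all
    · simp [Set.ncard_pair hab]

end CHAInstance

open CHAInstance in
theorem popular_fHouse_matched_min_general
    {A H : Type*} [Fintype A] [Fintype H] (I : CHAInstance A H)
    (M : Set (A × H)) (hM : IsPopular I M) (h : H) :
    ({a | (a, h) ∈ M} ∩ fSet I h).ncard = min (I.cap h) (fSet I h).ncard := by
  refine (le_min ((Set.ncard_le_ncard Set.inter_subset_left).trans (hM.1.2.2 h))
    (Set.ncard_le_ncard Set.inter_subset_right)).antisymm (not_lt.1 fun hlt => ?_)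
  obtain ⟨a, ha, haM⟩ : ∃ a ∈ fSet I h, (a, h) ∉ M := by
    by_contra! hall
    rw [show {a | (a, h) ∈ M} ∩ fSet I h = fSet I h from Set.inter_eq_right.2 hall] at hlt
    exact (lt_min_iff.1 hlt).2.false
  have hfull : {b | (b, h) ∈ M} ⊆ fSet I h := fun b hb => hM.isFirstChoice_of_mem ha haM hb
  rw [show {b | (b, h) ∈ M} ∩ fSet I h = {b | (b, h) ∈ M} from Set.inter_eq_left.2 hfull,
    hM.ncard_eq_cap ha haM] at hlt
  exact (lt_min_iff.1 hlt).1.false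

open CHAInstance in
/-- if `M` is a popular matching of a CHA instance, then every `f`-house
`h` satisfies `|M(h) ∩ f(h)| = min {c(h), |f(h)|}`. -/
theorem popular_fHouse_matched_min
    {A H : Type*} [Fintype A] [Fintype H] (I : CHAInstance A H)
    (M : Set (A × H)) (hM : IsPopular I M) (h : H) (hf : IsFHouse I h) :
    ({a | (a, h) ∈ M} ∩ fSet I h).ncard = min (I.cap h) (fSet I h).ncard :=
  popular_fHouse_matched_min_general I M hM h
end

section
/- Let M and M' be two popular matchings of a CHA instance I, with switching graphs G_M and G_{M'}. Then for every house h, the number of outgoing edges of weight −1 at h is the same in G_M and G_{M'}, and the number of incoming edges of weight +1 at h is the same in G_M and G_{M'}. -/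
namespace CHAInstance

variable {A H : Type*} {I : CHAInstance A H}

section Preferences

theorem exists_rank_le_of_adj {p : H → Prop} {a : A} {h₀ : H} (hadj : I.adj a h₀) (hp : p h₀) :
    ∃ h, I.adj a h ∧ p h ∧ ∀ h', I.adj a h' → p h' → I.rank a h ≤ I.rank a h' := by
  set s := {h | I.adj a h ∧ p h}
  have hs : s.Nonempty := ⟨h₀, hadj, hp⟩
  obtain ⟨hadj', hp'⟩ := Function.argminOn_mem (I.rank a) s hs
  exact ⟨_, hadj', hp', fun h' hh' hp' => Function.argminOn_le (I.rank a) s ⟨hh', hp'⟩⟩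

theorem exists_isFirstChoice_s10 (a : A) : ∃ h, IsFirstChoice I a h := by
  obtain ⟨h, hadj, -, hmin⟩ :=
    exists_rank_le_of_adj (p := fun _ => True) (I.lastResort_adj a) trivial
  exact ⟨h, hadj, fun h' hh' => hmin h' hh' trivial⟩

theorem IsFirstChoice.eq {a : A} {h h' : H} (hf : IsFirstChoice I a h)
    (hf' : IsFirstChoice I a h') : h = h' :=
  I.rank_strict a h h' hf.1 hf'.1 (le_antisymm (hf.2 _ hf'.1) (hf'.2 _ hf.1))

theorem IsFirstChoice.rank_lt {a : A} {h h' : H} (hf : IsFirstChoice I a h) (hadj : I.adj a h')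
    (hne : h' ≠ h) : I.rank a h < I.rank a h' :=
  (hf.2 h' hadj).lt_of_ne fun e => hne (I.rank_strict a h h' hf.1 hadj e).symm

theorem IsSecondChoice.rank_lt {a : A} {s h : H} (hs : IsSecondChoice I a s) (hadj : I.adj a h)
    (hh : SCond I a h) (hne : h ≠ s) : I.rank a s < I.rank a h :=
  (hs.2.2 h hadj hh).lt_of_ne fun e => hne (I.rank_strict a s h hs.1 hadj e).symm

theorem IsFirstChoice.not_sCond {a : A} {h : H} (hf : IsFirstChoice I a h) : ¬ SCond I a h := by
  rintro (hn | ⟨hnf, -⟩)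
  exacts [hn ⟨a, hf⟩, hnf hf]

theorem IsSecondChoice.not_isFirstChoice {a : A} {h : H} (hs : IsSecondChoice I a h) :
    ¬ IsFirstChoice I a h :=
  fun hf => hf.not_sCond hs.2.1

theorem exists_isSecondChoice_of_sCond {a : A} {h : H} (hadj : I.adj a h) (hs : SCond I a h) :
    ∃ s, IsSecondChoice I a s :=
  let ⟨s, hadj', hs', hmin⟩ := exists_rank_le_of_adj hadj hs
  ⟨s, hadj', hs', hmin⟩

theorem eq_of_adj_lastResort {a x : A} (hx : I.adj x (I.lastResort a)) : x = a :=
  I.lastResort_only a x hx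

theorem exists_isSecondChoice_iff {a : A} :
    (∃ s, IsSecondChoice I a s) ↔ ¬ IsFirstChoice I a (I.lastResort a) := by
  constructor
  · rintro ⟨s, hadj, hs, -⟩ hl
    obtain rfl : s = I.lastResort a := by
      by_contra hne
      exact (hl.2 s hadj).not_gt (I.lastResort_worst a s hadj hne)
    exact hl.not_sCond hs
  · intro hl
    refine exists_isSecondChoice_of_sCond (I.lastResort_adj a) (Or.inl ?_)
    rintro ⟨x, hx⟩
    obtain rfl := eq_of_adj_lastResort hx.1
    exact hl hx

end Preferences

section Matchings

def unmatch (M : Set (A × H)) (S : Set A) : Set (A × H) := {p ∈ M | p.1 ∉ S}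

variable {M N : Set (A × H)}

@[simp]
theorem mem_unmatch {S : Set A} {p : A × H} : p ∈ unmatch M S ↔ p ∈ M ∧ p.1 ∉ S :=
  Iff.rfl

theorem unmatch_subset (S : Set A) : unmatch M S ⊆ M := fun _ hp => hp.1

theorem IsMatching.eq_of_mem_s10 (hM : I.IsMatching M) {a : A} {h h' : H} (hh : (a, h) ∈ M)
    (hh' : (a, h') ∈ M) : h = h' :=
  congrArg Prod.snd (hM.2.1 _ hh _ hh' rfl)

theorem occupants_insert_of_ne {a : A} {h t : H} (hne : h ≠ t) :
    {x | (x, h) ∈ insert (a, t) M} = {x | (x, h) ∈ M} := by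
  ext x
  simp [hne]

theorem occupants_insert_self {a : A} {t : H} :
    {x | (x, t) ∈ insert (a, t) M} = insert a {x | (x, t) ∈ M} := by
  ext x
  simp

theorem ncard_occupants_unmatch_lt [Finite A] {S : Set A} {d : A} {h : H} (hd : (d, h) ∈ M)
    (hdS : d ∈ S) : {x | (x, h) ∈ unmatch M S}.ncard < {x | (x, h) ∈ M}.ncard :=
  Set.ncard_lt_ncard (t := {x | (x, h) ∈ M}) ⟨fun _ hx => hx.1, fun hsub => (hsub hd).2 hdS⟩

theorem IsMatching.mono [Finite A] (hM : I.IsMatching M) (hNM : N ⊆ M) : I.IsMatching N :=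
  ⟨fun p hp => hM.1 p (hNM hp), fun p hp q hq => hM.2.1 p (hNM hp) q (hNM hq),
    fun h => (Set.ncard_le_ncard (t := {x | (x, h) ∈ M}) fun _ hx => hNM hx).trans (hM.2.2 h)⟩

theorem IsMatching.insert [Finite A] (hM : I.IsMatching M) {a : A} {t : H}
    (ha : ∀ h, (a, h) ∉ M) (hadj : I.adj a t) (hcap : {x | (x, t) ∈ M}.ncard < I.cap t) :
    I.IsMatching (insert (a, t) M) := by
  refine ⟨?_, ?_, fun h => ?_⟩
  · rintro p (rfl | hp)
    exacts [hadj, hM.1 p hp]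
  · rintro p (rfl | hp) q (rfl | hq) he
    · rfl
    · exact (ha q.2 (by rwa [show a = q.1 from he])).elim
    · exact (ha p.2 (by rwa [show a = p.1 from he.symm])).elim
    · exact hM.2.1 p hp q hq he
  · rcases eq_or_ne h t with rfl | hne
    · rw [occupants_insert_self]
      exact (Set.ncard_insert_le _ _).trans hcap
    · rw [occupants_insert_of_ne hne]
      exact hM.2.2 h

end Matchings

section Popularity

variable {M N : Set (A × H)}

def IsContestable (I : CHAInstance A H) (M : Set (A × H)) (t : H) : Prop :=
  {x | (x, t) ∈ M}.ncard < I.cap t ∨ ∃ b, (b, t) ∈ M ∧ ¬ IsFirstChoice I b t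

theorem isContestable_of_sCond [Finite A] {a : A} {t : H} (ht : SCond I a t) :
    I.IsContestable M t := by
  refine or_iff_not_imp_left.2 fun hcap => ?_
  by_contra! hall
  rw [not_lt] at hcap
  rcases ht with hnotf | ⟨-, hlt⟩
  · obtain ⟨b, hb⟩ := (Set.ncard_pos).1 ((I.cap_pos t).trans_le hcap)
    exact hnotf ⟨b, hall b hb⟩
  · exact (hcap.trans (Set.ncard_le_ncard hall)).not_gt hlt

theorem Prefers.not_prefers_s10 {a : A} (hNM : Prefers I N M a) : ¬ Prefers I M N a := by
  rintro ⟨g, hg, hgN⟩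
  obtain ⟨h, hh, hhM⟩ := hNM
  exact (hgN h hh).not_gt (hhM g hg)

theorem mem_of_prefers_of_unmatch_subset {S : Set A} (hN : unmatch M S ⊆ N) {x : A}
    (hx : Prefers I M N x) : x ∈ S := by
  by_contra hxS
  obtain ⟨g, hg, hgN⟩ := hx
  exact (hgN g (hN ⟨hg, hxS⟩)).false

theorem not_isPopular_of_ncard_lt [Fintype A] (hN : I.IsMatching N) {S T : Set A}
    (hS : {x | Prefers I M N x} ⊆ S) (hT : T ⊆ {x | Prefers I N M x}) (hST : S.ncard < T.ncard) :
    ¬ IsPopular I M := by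
  refine fun hM => hM.2 N hN ?_
  rw [MorePopular, Nat.card_coe_set_eq, Nat.card_coe_set_eq]
  exact (Set.ncard_le_ncard hS).trans_lt (hST.trans_le (Set.ncard_le_ncard hT))

variable [Fintype A] {a b : A} {t u : H}

theorem not_isPopular_of_vacancy (hM : I.IsMatching M) (hadj : I.adj a t)
    (ha : ∀ h, (a, h) ∈ M → I.rank a t < I.rank a h)
    (hcap : {x | (x, t) ∈ M}.ncard < I.cap t) : ¬ IsPopular I M := by
  set N := insert (a, t) (unmatch M {a})
  have hN : I.IsMatching N := (hM.mono (unmatch_subset _)).insert (by simp) hadj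
    ((Set.ncard_le_ncard fun _ hx => hx.1).trans_lt hcap)
  have hpa : Prefers I N M a := ⟨t, Set.mem_insert _ _, ha⟩
  refine not_isPopular_of_ncard_lt hN (S := ∅) (T := {a}) (fun x hx => ?_)
    (Set.singleton_subset_iff.2 hpa) (by simp)
  obtain rfl : x = a := mem_of_prefers_of_unmatch_subset (S := {a}) (Set.subset_insert _ _) hx
  exact hpa.not_prefers_s10 hx

/-- `a` takes the house `t` of `b`, and `b` moves up to `u`, which has room once `a` has left. -/
theorem not_isPopular_of_promote_two (hM : I.IsMatching M) (hab : a ≠ b) (hadj : I.adj a t)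
    (hbu : I.adj b u) (hut : u ≠ t) (hbt : (b, t) ∈ M)
    (hcap : ({x | (x, u) ∈ M} \ {a}).ncard < I.cap u)
    (ha : ∀ h, (a, h) ∈ M → I.rank a t < I.rank a h)
    (hb : ∀ h, (b, h) ∈ M → I.rank b u < I.rank b h) : ¬ IsPopular I M := by
  set P := unmatch M {a, b}
  set N := insert (a, t) (insert (b, u) P)
  have hP : I.IsMatching P := hM.mono (unmatch_subset _)
  have hPu : {x | (x, u) ∈ P}.ncard < I.cap u :=
    (Set.ncard_le_ncard (t := {x | (x, u) ∈ M} \ {a})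
      fun _ hx => ⟨hx.1, fun e => hx.2 (Or.inl e)⟩).trans_lt hcap
  have hN : I.IsMatching N := by
    refine (hP.insert (by simp [P]) hbu hPu).insert (by simp [P, hab]) hadj ?_
    rw [occupants_insert_of_ne hut.symm]
    exact (ncard_occupants_unmatch_lt hbt (by simp)).trans_le (hM.2.2 t)
  have hpa : Prefers I N M a := ⟨t, by simp [N], ha⟩
  have hpb : Prefers I N M b := ⟨u, by simp [N], hb⟩
  refine not_isPopular_of_ncard_lt hN (S := ∅) (T := {a, b}) (fun x hx => ?_) ?_
    (by simp [Set.ncard_pair hab])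
  · rcases mem_of_prefers_of_unmatch_subset (S := {a, b}) (fun p hp => by simp [N, P, hp]) hx
      with rfl | rfl
    exacts [hpa.not_prefers_s10 hx, hpb.not_prefers_s10 hx]
  · rintro x (rfl | rfl)
    exacts [hpa, hpb]

/-- As `not_isPopular_of_promote_two`, making room at `u` by sending one of its agents `c`
to its last resort: `a` and `b` gain, only `c` loses. -/
theorem not_isPopular_of_promote_two_evict_one (hM : I.IsMatching M) {c : A} (hab : a ≠ b)
    (hca : c ≠ a) (hadj : I.adj a t) (hbu : I.adj b u) (hut : u ≠ t) (hbt : (b, t) ∈ M)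
    (hcu : (c, u) ∈ M) (ha : ∀ h, (a, h) ∈ M → I.rank a t < I.rank a h)
    (hb : ∀ h, (b, h) ∈ M → I.rank b u < I.rank b h) : ¬ IsPopular I M := by
  have hcb : c ≠ b := fun e => hut (hM.eq_of_mem_s10 (e ▸ hcu) hbt)
  have hul : u ≠ I.lastResort c := fun e => hcb (eq_of_adj_lastResort (e ▸ hbu)).symm
  have htl : t ≠ I.lastResort c :=
    fun e => hcb (eq_of_adj_lastResort (e ▸ hM.1 _ hbt)).symm
  set P := unmatch M {a, b, c}
  set N := insert (a, t) (insert (b, u) (insert (c, I.lastResort c) P))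
  have hP : I.IsMatching P := hM.mono (unmatch_subset _)
  have hPl : {x | (x, I.lastResort c) ∈ P} = ∅ := by
    refine Set.eq_empty_of_forall_notMem fun x hx => hx.2 ?_
    rw [eq_of_adj_lastResort (hM.1 _ hx.1)]
    simp
  have hN : I.IsMatching N := by
    refine ((hP.insert (by simp [P]) (I.lastResort_adj c) (by simp [hPl, I.cap_pos])).insert
      (by simp [P, hcb.symm]) hbu ?_).insert (by simp [P, hab, hca.symm]) hadj ?_
    · rw [occupants_insert_of_ne hul]
      exact (ncard_occupants_unmatch_lt hcu (by simp)).trans_le (hM.2.2 u)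
    · rw [occupants_insert_of_ne hut.symm, occupants_insert_of_ne htl]
      exact (ncard_occupants_unmatch_lt hbt (by simp)).trans_le (hM.2.2 t)
  have hpa : Prefers I N M a := ⟨t, by simp [N], ha⟩
  have hpb : Prefers I N M b := ⟨u, by simp [N], hb⟩
  refine not_isPopular_of_ncard_lt hN (S := {c}) (T := {a, b}) (fun x hx => ?_) ?_
    (by simp [Set.ncard_pair hab])
  · rcases mem_of_prefers_of_unmatch_subset (S := {a, b, c}) (fun p hp => by simp [N, P, hp]) hx
      with rfl | rfl | rfl
    exacts [(hpa.not_prefers_s10 hx).elim, (hpb.not_prefers_s10 hx).elim, rfl]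
  · rintro x (rfl | rfl)
    exacts [hpa, hpb]

theorem not_isPopular_of_displaceable (hM : I.IsMatching M) (hadj : I.adj a t)
    (ha : ∀ h, (a, h) ∈ M → I.rank a t < I.rank a h) (hbt : (b, t) ∈ M)
    (hbf : ¬ IsFirstChoice I b t) : ¬ IsPopular I M := by
  obtain ⟨u, hu⟩ := exists_isFirstChoice_s10 (I := I) b
  have hut : u ≠ t := fun e => hbf (e ▸ hu)
  have hb : ∀ h, (b, h) ∈ M → I.rank b u < I.rank b h := fun h hh =>
    hM.eq_of_mem_s10 hbt hh ▸ hu.rank_lt (hM.1 _ hbt) hut.symm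
  have hab : a ≠ b := by
    rintro rfl
    exact (ha t hbt).false
  by_cases hcap : ({x | (x, u) ∈ M} \ {a}).ncard < I.cap u
  · exact not_isPopular_of_promote_two hM hab hadj hu.1 hut hbt hcap ha hb
  · obtain ⟨c, hcu, hca⟩ : ({x | (x, u) ∈ M} \ {a}).Nonempty :=
      (Set.ncard_pos).1 ((I.cap_pos u).trans_le (not_lt.1 hcap))
    exact not_isPopular_of_promote_two_evict_one hM hab hca hadj hu.1 hut hbt hcu ha hb

theorem not_isPopular_of_improvable (hM : I.IsMatching M) (hadj : I.adj a t)
    (ha : ∀ h, (a, h) ∈ M → I.rank a t < I.rank a h) (ht : I.IsContestable M t) :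
    ¬ IsPopular I M := by
  rcases ht with hcap | ⟨b, hbt, hbf⟩
  exacts [not_isPopular_of_vacancy hM hadj ha hcap,
    not_isPopular_of_displaceable hM hadj ha hbt hbf]

end Popularity

section PopularMatchings

variable [Fintype A] {M : Set (A × H)}

theorem IsPopular.exists_mem (hM : IsPopular I M) (a : A) : ∃ h, (a, h) ∈ M := by
  by_contra! hun
  have hfree : {x | (x, I.lastResort a) ∈ M} = ∅ := by
    refine Set.eq_empty_of_forall_notMem fun x hx => ?_
    have hx : (x, I.lastResort a) ∈ M := hx
    obtain rfl : x = a := eq_of_adj_lastResort (hM.1.1 _ hx)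
    exact hun _ hx
  refine not_isPopular_of_vacancy hM.1 (I.lastResort_adj a) (fun h hh => (hun h hh).elim) ?_ hM
  simp [hfree, I.cap_pos]

theorem IsPopular.ncard_fSet_inter (hM : IsPopular I M) (h : H) :
    (fSet I h ∩ {x | (x, h) ∈ M}).ncard = min (I.cap h) (fSet I h).ncard := by
  refine le_antisymm (le_min ((Set.ncard_le_ncard Set.inter_subset_right).trans (hM.1.2.2 h))
    (Set.ncard_le_ncard Set.inter_subset_left)) (not_lt.1 fun hlt => ?_)
  obtain ⟨a, haf, hah⟩ : ∃ a ∈ fSet I h, (a, h) ∉ M := by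
    by_contra! hmatched
    exact (Set.ncard_le_ncard (s := fSet I h) (t := fSet I h ∩ {x | (x, h) ∈ M})
      fun x hx => ⟨hx, hmatched x hx⟩).not_gt (hlt.trans_le (min_le_right _ _))
  refine not_isPopular_of_improvable hM.1 haf.1
    (fun g hg => haf.rank_lt (hM.1.1 _ hg) fun e => hah (e ▸ hg)) ?_ hM
  refine or_iff_not_imp_right.2 fun hfirst => ?_
  simp only [not_exists, not_and, not_not] at hfirst
  have hsub : {x | (x, h) ∈ M} ⊆ fSet I h ∩ {x | (x, h) ∈ M} := fun x hx => ⟨hfirst x hx, hx⟩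
  exact (Set.ncard_le_ncard hsub).trans_lt (hlt.trans_le (min_le_left _ _))

theorem IsPopular.isFirstChoice_or_isSecondChoice (hM : IsPopular I M) {a : A} {h : H}
    (hah : (a, h) ∈ M) : IsFirstChoice I a h ∨ IsSecondChoice I a h := by
  by_contra! hneither
  obtain ⟨hnf, hns⟩ := hneither
  have hadj : I.adj a h := hM.1.1 _ hah
  by_cases hsc : SCond I a h
  · obtain ⟨s, hs⟩ := exists_isSecondChoice_of_sCond hadj hsc
    have hrank := hs.rank_lt hadj hsc fun e => hns (e ▸ hs)
    exact not_isPopular_of_improvable hM.1 hs.1 (fun g hg => hM.1.eq_of_mem_s10 hah hg ▸ hrank)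
      (isContestable_of_sCond hs.2.1) hM
  · -- `h` is then full of agents from `f(h)`, leaving no room for `a`.
    have hcap : I.cap h ≤ (fSet I h).ncard := not_lt.1 fun hlt => hsc (Or.inr ⟨hnf, hlt⟩)
    have hcount := hM.ncard_fSet_inter h
    rw [min_eq_left hcap] at hcount
    have hsub : insert a (fSet I h ∩ {x | (x, h) ∈ M}) ⊆ {x | (x, h) ∈ M} := by
      rintro x (rfl | hx)
      exacts [hah, hx.2]
    have hle := Set.ncard_le_ncard hsub
    rw [Set.ncard_insert_of_notMem fun hx => hnf hx.1, hcount] at hle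
    exact (hM.1.2.2 h).not_gt hle

end PopularMatchings

section SwitchingGraph

variable {M : Set (A × H)}

theorem setOf_swEdge_neg_one (h : H) :
    {a | ∃ tgt, SwEdge I M a h tgt (-1)} =
      fSet I h ∩ {x | (x, h) ∈ M} ∩ {x | ∃ s, IsSecondChoice I x s} := by
  ext x
  constructor
  · rintro ⟨tgt, hxh, ⟨hf, hs, -⟩ | ⟨-, -, hw⟩⟩
    · exact ⟨⟨hf, hxh⟩, tgt, hs⟩
    · norm_num at hw
  · rintro ⟨⟨hf, hxh⟩, s, hs⟩
    exact ⟨s, hxh, Or.inl ⟨hf, hs, rfl⟩⟩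

open Classical in
theorem IsPopular.ncard_setOf_swEdge_neg_one [Fintype A] (hM : IsPopular I M) (h : H) :
    {a | ∃ tgt, SwEdge I M a h tgt (-1)}.ncard =
      if ∃ a, h = I.lastResort a ∧ IsFirstChoice I a h then 0
      else min (I.cap h) (fSet I h).ncard := by
  rw [setOf_swEdge_neg_one]
  split_ifs with hl
  · obtain ⟨a, rfl, haf⟩ := hl
    refine (Set.ncard_eq_zero).2 (Set.eq_empty_of_forall_notMem ?_)
    rintro x ⟨⟨hxf, -⟩, hs⟩
    obtain rfl := eq_of_adj_lastResort hxf.1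
    exact exists_isSecondChoice_iff.1 hs haf
  · have hsub : fSet I h ∩ {x | (x, h) ∈ M} ⊆ {x | ∃ s, IsSecondChoice I x s} :=
      fun x hx => exists_isSecondChoice_iff.2 fun hxl => hl ⟨x, hx.1.eq hxl, hx.1⟩
    rw [Set.inter_eq_left.2 hsub]
    exact hM.ncard_fSet_inter h

theorem IsPopular.setOf_swEdge_one [Fintype A] (hM : IsPopular I M) (h : H) :
    {a | ∃ src, SwEdge I M a src h 1} = fSet I h \ {x | (x, h) ∈ M} := by
  ext x
  constructor
  · rintro ⟨src, hxs, ⟨-, -, hw⟩ | ⟨hs, hf, -⟩⟩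
    · norm_num at hw
    · exact ⟨hf, fun hxh => hs.not_isFirstChoice (hM.1.eq_of_mem_s10 hxh hxs ▸ hf)⟩
  · rintro ⟨hf, hxh⟩
    obtain ⟨src, hxs⟩ := hM.exists_mem x
    have hs := (hM.isFirstChoice_or_isSecondChoice hxs).resolve_left
      fun hfs => hxh (hfs.eq hf ▸ hxs)
    exact ⟨src, hxs, Or.inr ⟨hs, hf, rfl⟩⟩

theorem IsPopular.ncard_setOf_swEdge_one [Fintype A] (hM : IsPopular I M) (h : H) :
    {a | ∃ src, SwEdge I M a src h 1}.ncard =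
      (fSet I h).ncard - min (I.cap h) (fSet I h).ncard := by
  rw [hM.setOf_swEdge_one, ← hM.ncard_fSet_inter,
    ← Set.ncard_inter_add_ncard_sdiff_eq_ncard (fSet I h) {x | (x, h) ∈ M},
    Nat.add_sub_cancel_left]

end SwitchingGraph

end CHAInstance

open CHAInstance in
theorem switchingGraph_degree_invariants_general
    {A H : Type*} [Fintype A] (I : CHAInstance A H)
    (M M' : Set (A × H)) (hM : IsPopular I M) (hM' : IsPopular I M') (h : H) :
    {a : A | ∃ tgt : H, SwEdge I M a h tgt (-1)}.ncard =
        {a : A | ∃ tgt : H, SwEdge I M' a h tgt (-1)}.ncard ∧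
      {a : A | ∃ src : H, SwEdge I M a src h 1}.ncard =
        {a : A | ∃ src : H, SwEdge I M' a src h 1}.ncard :=
  ⟨by rw [hM.ncard_setOf_swEdge_neg_one, hM'.ncard_setOf_swEdge_neg_one],
    by rw [hM.ncard_setOf_swEdge_one, hM'.ncard_setOf_swEdge_one]⟩

open CHAInstance in
/-- Property 2: for any two popular matchings `M` and `M'` of a CHA
instance and any house `h`, the number of outgoing edges of weight `-1` at `h` is the
same in `G_M` and `G_{M'}`, and the number of incoming edges of weight `+1` at `h` is
the same in `G_M` and `G_{M'}`. -/
theorem switchingGraph_degree_invariants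
    {A H : Type*} [Fintype A] [Fintype H] (I : CHAInstance A H)
    (M M' : Set (A × H)) (hM : IsPopular I M) (hM' : IsPopular I M') (h : H) :
    {a : A | ∃ tgt : H, SwEdge I M a h tgt (-1)}.ncard =
        {a : A | ∃ tgt : H, SwEdge I M' a h tgt (-1)}.ncard ∧
      {a : A | ∃ src : H, SwEdge I M a src h 1}.ncard =
        {a : A | ∃ src : H, SwEdge I M' a src h 1}.ncard :=
  switchingGraph_degree_invariants_general I M M' hM hM' h
end
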